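/- (Theorem 3.1) Assume the CRK setup. Let M and K be skew-symmetric real d×d matrices, let S : ℝ^d × ℝ → ℝ be continuously differentiable in its first argument (gradient ∇_z S), let D be a skew-symmetric real N×N matrix, let x_0, …, x_{N−1} ∈ ℝ and Δt > 0. For j = 0, …, N−1 let δ_t z_j : [0,1] → ℝ^d be continuous and z_j⁰ ∈ ℝ^d, define z_j(τ) = z_j⁰ + Δt ∫₀¹ A_{τ,σ} δ_t z_j(σ) dσ, z_j¹ = z_j⁰ + Δt ∫₀¹ δ_t z_j(σ) dσ, and δ_x z_j(τ) = Σ_{k=0}^{N−1} D_{jk} z_k(τ), and assume the collocation equations M δ_t z_j(τ) + K δ_x z_j(τ) = ∇_z S(z_j(τ), x_j) hold for all τ ∈ [0,1] and all j. Then for every j, (E_j¹ − E_j⁰)/Δt + Σ_{k=0}^{N−1} D_{jk} F̄_{jk} = 0, where E_j^α = S(z_j^α, x_j) − (1/2) (z_j^α)ᵀ K Σ_{k=0}^{N−1} D_{jk} z_k^α for α ∈ {0,1} (with z_k⁰ = z_k(0)), and F̄_{jk} = (1/2) Σ_{i=1}^s b_i (⟨z_j⟩_iᵀ K ⟨δ_t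 z_k⟩_i + ⟨z_k⟩_iᵀ K ⟨δ_t z_j⟩_i). -/

import Mathlib

/-!
Along the collocation polynomials the local energy
`E_j(τ) = S(z_j(τ), x_j) - ½ z_j(τ)ᵀ K Σ_k D_jk z_k(τ)` is differentiable, and the collocation
equations replace `∇S` in `E_j'` by `M δ_t z_j + K δ_x z_j`. Each
`z_k'(τ) = Δt Σ_i l_i(τ) ⟨δ_t z_k⟩_i` is a combination of Lagrange polynomials, so pairing it
with any `v` and integrating over `[0, 1]` only sees the averages:
`∫₀¹ z_k'ᵀ A v = Δt Σ_i b_i ⟨δ_t z_k⟩_iᵀ A ⟨v⟩_i`. The `M`-term then integrates to zero by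
skew-symmetry of `M`, and skew-symmetry of `K` turns the two `K`-terms into `-Δt Σ_k D_jk F̄_jk`.
Finally `z_j(1) = z_j¹` because `Σ_i l_i = 1` and `∫₀¹ l_i = b_i`.
-/

open scoped Matrix

noncomputable def dotCLM {d : ℕ} (g : Fin d → ℝ) : (Fin d → ℝ) →L[ℝ] ℝ :=
  ∑ i : Fin d, g i • (ContinuousLinearMap.proj i : (Fin d → ℝ) →L[ℝ] ℝ)

noncomputable def lag {s : ℕ} (c : Fin s → ℝ) (i : Fin s) (τ : ℝ) : ℝ :=
  (Lagrange.basis (Finset.univ : Finset (Fin s)) c i).eval τ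

noncomputable def bw {s : ℕ} (c : Fin s → ℝ) (i : Fin s) : ℝ :=
  ∫ τ in (0:ℝ)..1, lag c i τ

noncomputable def Acrk {s : ℕ} (c : Fin s → ℝ) (τ σ : ℝ) : ℝ :=
  ∑ i : Fin s, (1 / bw c i) * (∫ α in (0:ℝ)..τ, lag c i α) * lag c i σ

noncomputable def wavg {s : ℕ} (c : Fin s → ℝ) (i : Fin s) {G : Type*}
    [NormedAddCommGroup G] [NormedSpace ℝ G] (f : ℝ → G) : G :=
  (1 / bw c i) • ∫ τ in (0:ℝ)..1, lag c i τ • f τ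

section Collocation

open MeasureTheory

variable {s : ℕ} (c : Fin s → ℝ)

@[fun_prop]
lemma continuous_lag (i : Fin s) : Continuous (lag c i) :=
  Polynomial.continuous _

variable {E : Type*} [NormedAddCommGroup E] [NormedSpace ℝ E]

lemma bw_smul_wavg {i : Fin s} (hb : bw c i ≠ 0) (f : ℝ → E) :
    bw c i • wavg c i f = ∫ τ in (0:ℝ)..1, lag c i τ • f τ := by
  rw [wavg, smul_smul, mul_one_div_cancel hb, one_smul]

lemma IntervalIntegrable.lag_smul {f : ℝ → E} (hf : IntervalIntegrable f volume 0 1)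
    (i : Fin s) : IntervalIntegrable (fun τ => lag c i τ • f τ) volume 0 1 :=
  hf.continuousOn_smul (continuous_lag c i).continuousOn

noncomputable section

def crkStage (z0 : E) (Δt : ℝ) (g : ℝ → E) (τ : ℝ) : E :=
  z0 + Δt • ∫ σ in (0:ℝ)..1, Acrk c τ σ • g σ

def crkStageDeriv (Δt : ℝ) (g : ℝ → E) (τ : ℝ) : E :=
  Δt • ∑ i, lag c i τ • wavg c i g

end

variable {c}

lemma sum_lag [Nonempty (Fin s)] (hc : Function.Injective c) (τ : ℝ) :
    ∑ i, lag c i τ = 1 := by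
  simp only [lag, ← Polynomial.eval_finsetSum,
    Lagrange.sum_basis hc.injOn Finset.univ_nonempty, Polynomial.eval_one]

lemma integral_Acrk_smul {g : ℝ → E} (hg : IntervalIntegrable g volume 0 1) (τ : ℝ) :
    ∫ σ in (0:ℝ)..1, Acrk c τ σ • g σ = ∑ i, (∫ α in (0:ℝ)..τ, lag c i α) • wavg c i g := by
  have hsplit : ∀ σ, Acrk c τ σ • g σ
      = ∑ i, ((1 / bw c i) * ∫ α in (0:ℝ)..τ, lag c i α) • (lag c i σ • g σ) := fun σ => by
    simp only [Acrk, Finset.sum_smul, smul_smul]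
  simp only [hsplit]
  rw [intervalIntegral.integral_finsetSum fun i _ => by exact (hg.lag_smul c i).smul (_ : ℝ)]
  refine Finset.sum_congr rfl fun i _ => ?_
  rw [intervalIntegral.integral_smul, wavg, smul_smul, mul_comm (1 / bw c i)]

lemma hasDerivAt_crkStage (z0 : E) (Δt : ℝ) {g : ℝ → E} (hg : IntervalIntegrable g volume 0 1)
    (τ : ℝ) : HasDerivAt (crkStage c z0 Δt g) (crkStageDeriv c Δt g τ) τ := by
  have hstage : crkStage c z0 Δt g
      = fun τ => z0 + Δt • ∑ i, (∫ α in (0:ℝ)..τ, lag c i α) • wavg c i g := by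
    ext1 τ
    rw [crkStage, integral_Acrk_smul hg]
  rw [hstage]
  exact ((HasDerivAt.fun_sum fun i _ =>
    ((continuous_lag c i).integral_hasStrictDerivAt 0 τ).hasDerivAt.smul_const _).const_smul
      Δt).const_add z0

lemma crkStage_one [Nonempty (Fin s)] (hc : Function.Injective c) (hb : ∀ i, bw c i ≠ 0)
    (z0 : E) (Δt : ℝ) {g : ℝ → E} (hg : IntervalIntegrable g volume 0 1) :
    crkStage c z0 Δt g 1 = z0 + Δt • ∫ σ in (0:ℝ)..1, g σ := by
  have hsum : ∑ i, bw c i • wavg c i g = ∫ σ in (0:ℝ)..1, g σ := by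
    simp only [bw_smul_wavg _ (hb _)]
    rw [← intervalIntegral.integral_finsetSum fun i _ => hg.lag_smul c i]
    simp only [← Finset.sum_smul, sum_lag hc, one_smul]
  rw [crkStage, integral_Acrk_smul hg, ← hsum]
  rfl

@[fun_prop]
lemma continuous_crkStageDeriv (Δt : ℝ) (g : ℝ → E) : Continuous (crkStageDeriv c Δt g) := by
  unfold crkStageDeriv
  fun_prop

end Collocation

section DotProduct

open Matrix

lemma dotProduct_mulVec_eq_neg_of_transpose_eq_neg {R n : Type*} [CommRing R] [Fintype n]
    {A : Matrix n n R} (hA : Aᵀ = -A) (x y : n → R) : x ⬝ᵥ A *ᵥ y = -(y ⬝ᵥ A *ᵥ x) := by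
  rw [← dotProduct_transpose_mulVec, hA, neg_mulVec, dotProduct_neg]

lemma dotProduct_mulVec_self_of_transpose_eq_neg {R n : Type*} [CommRing R] [NoZeroDivisors R]
    [CharZero R] [Fintype n] {A : Matrix n n R} (hA : Aᵀ = -A) (x : n → R) :
    x ⬝ᵥ A *ᵥ x = 0 :=
  CharZero.eq_neg_self_iff.1 (dotProduct_mulVec_eq_neg_of_transpose_eq_neg hA x x)

variable {𝕜 ι : Type*} [NontriviallyNormedField 𝕜] [Fintype ι] {u v : 𝕜 → ι → 𝕜}
  {u' v' : ι → 𝕜} {t : 𝕜}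

lemma HasDerivAt.dotProduct (hu : HasDerivAt u u' t) (hv : HasDerivAt v v' t) :
    HasDerivAt (fun t => u t ⬝ᵥ v t) (u' ⬝ᵥ v t + u t ⬝ᵥ v') t := by
  simp only [_root_.dotProduct, ← Finset.sum_add_distrib]
  exact HasDerivAt.fun_sum fun i _ => (hasDerivAt_pi.1 hu i).mul (hasDerivAt_pi.1 hv i)

lemma HasDerivAt.matrix_mulVec {κ : Type*} (A : Matrix κ ι 𝕜) (hv : HasDerivAt v v' t) :
    HasDerivAt (fun t => A *ᵥ v t) (A *ᵥ v') t :=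
  hasDerivAt_pi.2 fun k => by
    simpa [mulVec] using (hasDerivAt_const t (A k)).dotProduct hv

lemma dotCLM_apply {d : ℕ} (a v : Fin d → ℝ) : dotCLM a v = a ⬝ᵥ v := by
  simp [dotCLM, dotProduct]

variable {d : ℕ} {F : ℝ → Fin d → ℝ} {a b : ℝ} {μ : MeasureTheory.Measure ℝ}

lemma IntervalIntegrable.dotProduct_left (w : Fin d → ℝ) (hF : IntervalIntegrable F μ a b) :
    IntervalIntegrable (fun t => w ⬝ᵥ F t) μ a b := by
  simp only [← dotCLM_apply]
  exact ⟨(dotCLM w).integrable_comp hF.1, (dotCLM w).integrable_comp hF.2⟩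

lemma intervalIntegral.integral_dotProduct_left (w : Fin d → ℝ)
    (hF : IntervalIntegrable F μ a b) :
    ∫ t in a..b, w ⬝ᵥ F t ∂μ = w ⬝ᵥ ∫ t in a..b, F t ∂μ := by
  simp only [← dotCLM_apply]
  exact (dotCLM w).intervalIntegral_comp_comm hF

end DotProduct

section Quadrature

open Matrix MeasureTheory

variable {s d e : ℕ} {c : Fin s → ℝ}

lemma integral_crkStageDeriv_dotProduct_mulVec (hb : ∀ i, bw c i ≠ 0) (Δt : ℝ)
    (g : ℝ → Fin d → ℝ) (A : Matrix (Fin d) (Fin e) ℝ) {h : ℝ → Fin e → ℝ}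
    (hh : IntervalIntegrable h volume 0 1) :
    ∫ t in (0:ℝ)..1, crkStageDeriv c Δt g t ⬝ᵥ A *ᵥ h t
      = Δt * ∑ i, bw c i * (wavg c i g ⬝ᵥ A *ᵥ wavg c i h) := by
  have hpoint : ∀ t, crkStageDeriv c Δt g t ⬝ᵥ A *ᵥ h t
      = Δt * ∑ i, (wavg c i g ᵥ* A) ⬝ᵥ (lag c i t • h t) := fun t => by
    simp only [crkStageDeriv, ← dotProduct_mulVec, smul_dotProduct, sum_dotProduct,
      dotProduct_smul, smul_eq_mul]
  simp only [hpoint]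
  rw [intervalIntegral.integral_const_mul, intervalIntegral.integral_finsetSum fun i _ =>
    (hh.lag_smul c i).dotProduct_left _]
  congr 1
  refine Finset.sum_congr rfl fun i _ => ?_
  rw [intervalIntegral.integral_dotProduct_left _ (hh.lag_smul c i), ← bw_smul_wavg c (hb i),
    dotProduct_smul, smul_eq_mul, dotProduct_mulVec]

lemma integral_dotProduct_mulVec_crkStageDeriv (hb : ∀ i, bw c i ≠ 0) (Δt : ℝ)
    (g : ℝ → Fin d → ℝ) (A : Matrix (Fin e) (Fin d) ℝ) {h : ℝ → Fin e → ℝ}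
    (hh : IntervalIntegrable h volume 0 1) :
    ∫ t in (0:ℝ)..1, h t ⬝ᵥ A *ᵥ crkStageDeriv c Δt g t
      = Δt * ∑ i, bw c i * (wavg c i h ⬝ᵥ A *ᵥ wavg c i g) := by
  simp only [← dotProduct_transpose_mulVec A]
  exact integral_crkStageDeriv_dotProduct_mulVec hb Δt g Aᵀ hh

end Quadrature

section Energy

open Matrix MeasureTheory Set

variable {s d N : ℕ}

noncomputable section

def localEnergy (S : (Fin d → ℝ) → ℝ → ℝ) (K : Matrix (Fin d) (Fin d) ℝ)
    (D : Matrix (Fin N) (Fin N) ℝ) (x : Fin N → ℝ) (u : Fin N → ℝ → Fin d → ℝ) (j : Fin N)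
    (t : ℝ) : ℝ :=
  S (u j t) (x j) - (1/2) * (u j t ⬝ᵥ K *ᵥ ∑ k, D j k • u k t)

def crkFlux (c : Fin s → ℝ) (K : Matrix (Fin d) (Fin d) ℝ) (u g : Fin N → ℝ → Fin d → ℝ)
    (j k : Fin N) : ℝ :=
  (1/2) * ∑ i, bw c i *
    (wavg c i (u j) ⬝ᵥ K *ᵥ wavg c i (g k) + wavg c i (u k) ⬝ᵥ K *ᵥ wavg c i (g j))

end

variable {c : Fin s → ℝ} {K : Matrix (Fin d) (Fin d) ℝ} {u g : Fin N → ℝ → Fin d → ℝ}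

lemma integral_crkStageDeriv_sub_eq_crkFlux (hb : ∀ i, bw c i ≠ 0) (hK : Kᵀ = -K) (Δt : ℝ)
    {j k : Fin N} (huj : Continuous (u j)) (huk : Continuous (u k)) :
    ∫ t in (0:ℝ)..1, (crkStageDeriv c Δt (g j) t ⬝ᵥ K *ᵥ u k t
        - u j t ⬝ᵥ K *ᵥ crkStageDeriv c Δt (g k) t)
      = -(2 * Δt * crkFlux c K u g j k) := by
  have hint₁ : Continuous fun t => crkStageDeriv c Δt (g j) t ⬝ᵥ K *ᵥ u k t := by fun_prop
  have hint₂ : Continuous fun t => u j t ⬝ᵥ K *ᵥ crkStageDeriv c Δt (g k) t := by fun_prop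
  rw [intervalIntegral.integral_sub (hint₁.intervalIntegrable 0 1) (hint₂.intervalIntegrable 0 1),
    integral_crkStageDeriv_dotProduct_mulVec hb Δt _ K (huk.intervalIntegrable 0 1),
    integral_dotProduct_mulVec_crkStageDeriv hb Δt _ K (huj.intervalIntegrable 0 1), crkFlux]
  simp only [dotProduct_mulVec_eq_neg_of_transpose_eq_neg hK (wavg c _ (g j))]
  simp only [Finset.mul_sum, ← Finset.sum_sub_distrib, ← Finset.sum_neg_distrib]
  refine Finset.sum_congr rfl fun i _ => ?_
  ring

lemma dotProduct_mulVec_sum_smul {R n ι : Type*} [CommSemiring R] [Fintype n]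
    (A : Matrix n n R) (v : n → R) (a : ι → R) (w : ι → n → R) (t : Finset ι) :
    v ⬝ᵥ A *ᵥ ∑ k ∈ t, a k • w k = ∑ k ∈ t, a k * (v ⬝ᵥ A *ᵥ w k) := by
  simp only [mulVec_sum, mulVec_smul, dotProduct_sum, dotProduct_smul, smul_eq_mul]

lemma hasDerivAt_localEnergy {S : (Fin d → ℝ) → ℝ → ℝ} {gradS : (Fin d → ℝ) → ℝ → (Fin d → ℝ)}
    {D : Matrix (Fin N) (Fin N) ℝ} {x : Fin N → ℝ} {j : Fin N} {U : Fin N → Fin d → ℝ} {t : ℝ}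
    (hS : ∀ w, HasFDerivAt (fun w' => S w' (x j)) (dotCLM (gradS w (x j))) w)
    (hu : ∀ k, HasDerivAt (u k) (U k) t) :
    HasDerivAt (localEnergy S K D x u j) (gradS (u j t) (x j) ⬝ᵥ U j
      - (1/2) * (U j ⬝ᵥ K *ᵥ ∑ k, D j k • u k t + u j t ⬝ᵥ K *ᵥ ∑ k, D j k • U k)) t := by
  have hSu : HasDerivAt (fun t => S (u j t) (x j)) (gradS (u j t) (x j) ⬝ᵥ U j) t := by
    simpa [Function.comp_def, dotCLM_apply] using (hS (u j t)).comp_hasDerivAt t (hu j)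
  have hw : HasDerivAt (fun t => ∑ k, D j k • u k t) (∑ k, D j k • U k) t :=
    HasDerivAt.fun_sum fun k _ => (hu k).const_smul (D j k)
  exact hSu.sub (((hu j).dotProduct (hw.matrix_mulVec K)).const_mul (1/2))

theorem localEnergy_one_sub_localEnergy_zero (hb : ∀ i, bw c i ≠ 0)
    {M : Matrix (Fin d) (Fin d) ℝ} (hM : Mᵀ = -M) (hK : Kᵀ = -K)
    {S : (Fin d → ℝ) → ℝ → ℝ} {gradS : (Fin d → ℝ) → ℝ → (Fin d → ℝ)}
    {D : Matrix (Fin N) (Fin N) ℝ} {x : Fin N → ℝ} {Δt : ℝ} {j : Fin N}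
    (hS : ∀ w, HasFDerivAt (fun w' => S w' (x j)) (dotCLM (gradS w (x j))) w)
    (hgj : ContinuousOn (g j) (Icc 0 1))
    (hu : ∀ k t, HasDerivAt (u k) (crkStageDeriv c Δt (g k) t) t)
    (hcoll : ∀ t ∈ Icc (0:ℝ) 1,
      M *ᵥ g j t + K *ᵥ ∑ k, D j k • u k t = gradS (u j t) (x j)) :
    localEnergy S K D x u j 1 - localEnergy S K D x u j 0
      = -(Δt * ∑ k, D j k * crkFlux c K u g j k) := by
  have hucont : ∀ k, Continuous (u k) := fun k =>
    continuous_iff_continuousAt.2 fun t => (hu k t).continuousAt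
  set U := fun k => crkStageDeriv c Δt (g k) with hU
  set ψ : ℝ → ℝ := fun t => U j t ⬝ᵥ M *ᵥ g j t
    + (1/2) * ∑ k, D j k * (U j t ⬝ᵥ K *ᵥ u k t - u j t ⬝ᵥ K *ᵥ U k t)
  have hderiv : ∀ t ∈ uIcc (0:ℝ) 1, HasDerivAt (localEnergy S K D x u j) (ψ t) t := by
    intro t ht
    refine (hasDerivAt_localEnergy hS fun k => hu k t).congr_deriv ?_
    rw [← hcoll t (by rwa [uIcc_of_le zero_le_one] at ht), add_dotProduct,
      dotProduct_comm (M *ᵥ _), dotProduct_comm (K *ᵥ _), dotProduct_mulVec_sum_smul,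
      dotProduct_mulVec_sum_smul]
    simp only [ψ, mul_sub, Finset.sum_sub_distrib]
    ring
  have hfirst : ContinuousOn (fun t => U j t ⬝ᵥ M *ᵥ g j t) (Icc 0 1) := by fun_prop
  have hpair : ∀ k, Continuous fun t => U j t ⬝ᵥ K *ᵥ u k t - u j t ⬝ᵥ K *ᵥ U k t :=
    fun k => by fun_prop
  have hsecond : Continuous fun t =>
      (1/2) * ∑ k, D j k * (U j t ⬝ᵥ K *ᵥ u k t - u j t ⬝ᵥ K *ᵥ U k t) := by fun_prop
  rw [← intervalIntegral.integral_eq_sub_of_hasDerivAt hderiv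
      ((hfirst.add hsecond.continuousOn).intervalIntegrable_of_Icc zero_le_one),
    intervalIntegral.integral_add (hfirst.intervalIntegrable_of_Icc zero_le_one)
      (hsecond.intervalIntegrable 0 1),
    intervalIntegral.integral_const_mul, intervalIntegral.integral_finsetSum fun k _ =>
      ((hpair k).intervalIntegrable 0 1).const_mul _]
  simp only [intervalIntegral.integral_const_mul, hU,
    integral_crkStageDeriv_sub_eq_crkFlux hb hK Δt (hucont j) (hucont _),
    integral_crkStageDeriv_dotProduct_mulVec hb Δt (g j) M
      (hgj.intervalIntegrable_of_Icc zero_le_one),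
    dotProduct_mulVec_self_of_transpose_eq_neg hM, mul_zero, Finset.sum_const_zero, zero_add]
  rw [Finset.mul_sum, Finset.mul_sum, ← Finset.sum_neg_distrib]
  refine Finset.sum_congr rfl fun k _ => ?_
  ring

end Energy

theorem stmt6_general {s d N : ℕ} (hs : 1 ≤ s) (c : Fin s → ℝ) (hc : Function.Injective c)
    (hb : ∀ i, bw c i ≠ 0)
    (M K : Matrix (Fin d) (Fin d) ℝ) (hM : Mᵀ = -M) (hK : Kᵀ = -K)
    (S : (Fin d → ℝ) → ℝ → ℝ) (gradS : (Fin d → ℝ) → ℝ → (Fin d → ℝ))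
    (hS : ∀ (x : ℝ) (w : Fin d → ℝ), HasFDerivAt (fun w' => S w' x) (dotCLM (gradS w x)) w)
    (D : Matrix (Fin N) (Fin N) ℝ)
    (x : Fin N → ℝ) (Δt : ℝ) (hΔt : 0 < Δt)
    (δtz : Fin N → ℝ → (Fin d → ℝ)) (hδtc : ∀ j, ContinuousOn (δtz j) (Set.Icc 0 1))
    (z0 : Fin N → Fin d → ℝ) (z : Fin N → ℝ → (Fin d → ℝ))
    (hz : ∀ j τ, z j τ = z0 j + Δt • ∫ σ in (0:ℝ)..1, Acrk c τ σ • δtz j σ)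
    (z1 : Fin N → Fin d → ℝ)
    (hz1 : ∀ j, z1 j = z0 j + Δt • ∫ σ in (0:ℝ)..1, δtz j σ)
    (δxz : Fin N → ℝ → (Fin d → ℝ))
    (hδx : ∀ j τ, δxz j τ = ∑ k, D j k • z k τ)
    (hcoll : ∀ j, ∀ τ ∈ Set.Icc (0:ℝ) 1,
      M.mulVec (δtz j τ) + K.mulVec (δxz j τ) = gradS (z j τ) (x j))
    (E0 E1 : Fin N → ℝ)
    (hE0 : ∀ j, E0 j = S (z j 0) (x j)
        - (1/2) * dotProduct (z j 0) (K.mulVec (∑ k, D j k • z k 0)))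
    (hE1 : ∀ j, E1 j = S (z1 j) (x j)
        - (1/2) * dotProduct (z1 j) (K.mulVec (∑ k, D j k • z1 k)))
    (Fb : Fin N → Fin N → ℝ)
    (hFb : ∀ j k, Fb j k = (1/2) * ∑ i, bw c i *
        (dotProduct (wavg c i (z j)) (K.mulVec (wavg c i (δtz k)))
          + dotProduct (wavg c i (z k)) (K.mulVec (wavg c i (δtz j))))) :
    ∀ j, (E1 j - E0 j) / Δt + ∑ k, D j k * Fb j k = 0 := by
  intro j
  have : Nonempty (Fin s) := ⟨⟨0, hs⟩⟩
  have hδt : ∀ k, IntervalIntegrable (δtz k) MeasureTheory.volume 0 1 := fun k =>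
    (hδtc k).intervalIntegrable_of_Icc zero_le_one
  have hstage : ∀ k, z k = crkStage c (z0 k) Δt (δtz k) := fun k => funext (hz k)
  have hz1' : ∀ k, z1 k = z k 1 := fun k => by
    rw [hstage, crkStage_one hc hb _ _ (hδt k), hz1]
  have hbalance := localEnergy_one_sub_localEnergy_zero (x := x) (j := j) hb hM hK (hS (x j))
    (hδtc j) (fun k t => hstage k ▸ hasDerivAt_crkStage _ _ (hδt k) t)
    (fun t ht => hδx j t ▸ hcoll j t ht)
  have hE : E1 j - E0 j = localEnergy S K D x z j 1 - localEnergy S K D x z j 0 := by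
    simp only [hE0, hE1, hz1', localEnergy]
  have hF : ∀ k, Fb j k = crkFlux c K z δtz j k := fun k => hFb j k
  simp only [hE, hbalance, hF, neg_div, mul_div_cancel_left₀ _ hΔt.ne', neg_add_cancel]

theorem stmt6 {s d N : ℕ} (hs : 1 ≤ s) (c : Fin s → ℝ) (hc : Function.Injective c)
    (hb : ∀ i, bw c i ≠ 0)
    (M K : Matrix (Fin d) (Fin d) ℝ) (hM : Mᵀ = -M) (hK : Kᵀ = -K)
    (S : (Fin d → ℝ) → ℝ → ℝ) (gradS : (Fin d → ℝ) → ℝ → (Fin d → ℝ))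
    (hS : ∀ (x : ℝ) (w : Fin d → ℝ), HasFDerivAt (fun w' => S w' x) (dotCLM (gradS w x)) w)
    (hSc : ∀ x : ℝ, Continuous fun w => gradS w x)
    (D : Matrix (Fin N) (Fin N) ℝ) (hD : Dᵀ = -D)
    (x : Fin N → ℝ) (Δt : ℝ) (hΔt : 0 < Δt)
    (δtz : Fin N → ℝ → (Fin d → ℝ)) (hδtc : ∀ j, ContinuousOn (δtz j) (Set.Icc 0 1))
    (z0 : Fin N → Fin d → ℝ) (z : Fin N → ℝ → (Fin d → ℝ))
    (hz : ∀ j τ, z j τ = z0 j + Δt • ∫ σ in (0:ℝ)..1, Acrk c τ σ • δtz j σ)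
    (z1 : Fin N → Fin d → ℝ)
    (hz1 : ∀ j, z1 j = z0 j + Δt • ∫ σ in (0:ℝ)..1, δtz j σ)
    (δxz : Fin N → ℝ → (Fin d → ℝ))
    (hδx : ∀ j τ, δxz j τ = ∑ k, D j k • z k τ)
    (hcoll : ∀ j, ∀ τ ∈ Set.Icc (0:ℝ) 1,
      M.mulVec (δtz j τ) + K.mulVec (δxz j τ) = gradS (z j τ) (x j))
    (E0 E1 : Fin N → ℝ)
    (hE0 : ∀ j, E0 j = S (z j 0) (x j)
        - (1/2) * dotProduct (z j 0) (K.mulVec (∑ k, D j k • z k 0)))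
    (hE1 : ∀ j, E1 j = S (z1 j) (x j)
        - (1/2) * dotProduct (z1 j) (K.mulVec (∑ k, D j k • z1 k)))
    (Fb : Fin N → Fin N → ℝ)
    (hFb : ∀ j k, Fb j k = (1/2) * ∑ i, bw c i *
        (dotProduct (wavg c i (z j)) (K.mulVec (wavg c i (δtz k)))
          + dotProduct (wavg c i (z k)) (K.mulVec (wavg c i (δtz j))))) :
    ∀ j, (E1 j - E0 j) / Δt + ∑ k, D j k * Fb j k = 0 :=
  stmt6_general hs c hc hb M K hM hK S gradS hS D x Δt hΔt δtz hδtc z0 z hz z1 hz1 δxz hδx hcoll E0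
    E1 hE0 hE1 Fb hFb
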